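/- arXiv:2111.00282 — 3 statements merged into one kernel-verified Lean document; each statement's English description precedes it below -/
import Mathlib

section
/- The number of distinct sets of the form N(S)∩Y over all subsets S of X equals the number of distinct sets of the form N(T)∩X over all subsets T of Y; i.e., boolean-width of a bipartition is symmetric. -/
open Set

lemma aux7 {V : Type*} [Fintype V] (r : V → V → Prop) (hsym : Symmetric r)
    (A B : Set V) :
    {T : Set V | ∃ S ⊆ A, T = {b ∈ B | ∃ a ∈ S, r a b}}.ncard ≤
      {T : Set V | ∃ S ⊆ B, T = {a ∈ A | ∃ b ∈ S, r b a}}.ncard := by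
  apply Set.ncard_le_ncard_of_injOn (fun U => {a ∈ A | ∃ b ∈ B \ U, r b a})
  · rintro U ⟨S, hS, rfl⟩
    exact ⟨_, Set.diff_subset, rfl⟩
  · have key : ∀ U ∈ {T : Set V | ∃ S ⊆ A, T = {b ∈ B | ∃ a ∈ S, r a b}},
        {b ∈ B | ∃ a ∈ A \ {a ∈ A | ∃ b ∈ B \ U, r b a}, r a b} = U := by
      rintro U ⟨S, hS, rfl⟩
      ext b
      constructor
      · rintro ⟨hbB, a, ⟨haA, ha⟩, hab⟩
        refine ⟨hbB, ?_⟩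
        by_contra hbU
        exact ha ⟨haA, b, ⟨hbB, fun h => hbU h.2⟩, hsym hab⟩
      · rintro ⟨hbB, a, haS, hab⟩
        refine ⟨hbB, a, ⟨hS haS, fun hmem => ?_⟩, hab⟩
        obtain ⟨-, b', ⟨hb'B, hb'U⟩, hb'a⟩ := hmem
        exact hb'U ⟨hb'B, a, haS, hsym hb'a⟩
    intro U hU U' hU' h
    simp only at h
    rw [← key U hU, ← key U' hU', h]


/-- Boolean-width is symmetric: the number of distinct sets `N(S) ∩ Y` over
`S ⊆ X` equals the number of distinct sets `N(T) ∩ X` over `T ⊆ Y`. -/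
theorem stmt7 {V : Type*} [Fintype V] (G : SimpleGraph V) (X Y : Set V)
    (hdisj : Disjoint X Y) :
    {T : Set V | ∃ S ⊆ X, T = {y ∈ Y | ∃ x ∈ S, G.Adj x y}}.ncard =
      {T : Set V | ∃ S ⊆ Y, T = {x ∈ X | ∃ y ∈ S, G.Adj y x}}.ncard := by
  exact le_antisymm (aux7 G.Adj (fun _ _ h => h.symm) X Y) (aux7 G.Adj (fun _ _ h => h.symm) Y X)
end

section
/- If a graph G has a rooted branch decomposition of boolean-width at most d, then G has component twin-width at most 2^{d+1}: there is a partition sequence of G in which every red component of every quotient trigraph has at most 2^{d+1} parts. -/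
open Set

variable {V : Type*}

/-- `X, Y` form a homogeneous pair: complete or anticomplete between them. -/
def HomogPair (G : SimpleGraph V) (X Y : Set V) : Prop :=
  (∀ x ∈ X, ∀ y ∈ Y, G.Adj x y) ∨ (∀ x ∈ X, ∀ y ∈ Y, ¬ G.Adj x y)

/-- Red adjacency between parts of a partition, with red loops on
non-singleton parts. -/
def RedAdj (G : SimpleGraph V) (P : Set (Set V)) (X Y : Set V) : Prop :=
  X ∈ P ∧ Y ∈ P ∧ ((X = Y ∧ ¬ X.Subsingleton) ∨ (X ≠ Y ∧ ¬ HomogPair G X Y))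

/-- Maximum number of parts in a red connected component of the quotient
trigraph `G / P`. -/
noncomputable def wc (G : SimpleGraph V) (P : Set (Set V)) : ℕ :=
  sSup ((fun X => {Y | Relation.ReflTransGen (RedAdj G P) X Y}.ncard) '' P)

/-- A partition sequence of the vertex set `V`. -/
structure PartitionSeq (V : Type*) [Fintype V] where
  n : ℕ
  hn : n = Fintype.card V
  P : ℕ → Set (Set V)
  partition : ∀ i, 1 ≤ i → i ≤ n → Setoid.IsPartition (P i)
  singletons : P n = {S | ∃ v, S = {v}}
  whole : P 1 = {Set.univ}
  merge : ∀ i, 1 ≤ i → i < n → ∃ X Y, X ∈ P (i + 1) ∧ Y ∈ P (i + 1) ∧ X ≠ Y ∧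
    P i = (P (i + 1) \ {X, Y}) ∪ {X ∪ Y}

/-- The boolean-width of a bipartition `(X, Y)`: `log₂` of the number of distinct
sets `N(S) ∩ Y` over `S ⊆ X`. -/
noncomputable def boolW (G : SimpleGraph V) (X Y : Set V) : ℝ :=
  Real.logb 2
    (({T : Set V | ∃ S ⊆ X, T = {y ∈ Y | ∃ x ∈ S, G.Adj x y}}.ncard : ℝ))

/-- A branch decomposition of a graph on vertex set `V`: a finite (sub)cubic tree
whose leaves are in one-to-one correspondence with `V`. -/
structure BranchDecomp (V : Type*) where
  N : Type
  fin : Finite N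
  T : SimpleGraph N
  tree : T.IsTree
  deg : ∀ x : N, (T.neighborSet x).ncard = 1 ∨ (T.neighborSet x).ncard = 3
  leaf : V → N
  leaf_inj : Function.Injective leaf
  leaf_range : Set.range leaf = {x : N | (T.neighborSet x).ncard = 1}

/-- The side of the bipartition of `V` associated to the tree edge `uv`
containing the leaves reaching `u` after the edge `uv` is removed. -/
def BranchDecomp.side (B : BranchDecomp V) (u v : B.N) : Set V :=
  {w : V | (B.T.deleteEdges {s(u, v)}).Reachable (B.leaf w) u}


section Helpers

variable (G : SimpleGraph V)

/-- `C` has uniform adjacency toward every vertex outside `M`. -/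
def Unif (C M : Set V) : Prop :=
  ∀ x ∈ C, ∀ x' ∈ C, ∀ y, y ∉ M → (G.Adj x y ↔ G.Adj x' y)

lemma Unif.mono {C C' M : Set V} (h : Unif G C M) (hs : C' ⊆ C) : Unif G C' M :=
  fun x hx x' hx' y hy => h x (hs hx) x' (hs hx') y hy

lemma Unif.mono_out {C M M' : Set V} (h : Unif G C M) (hs : M ⊆ M') : Unif G C M' :=
  fun x hx x' hx' y hy => h x hx x' hx' y (fun hc => hy (hs hc))

lemma homog_of_unif {C C' M M' : Set V} (hC : C ⊆ M) (hC' : C' ⊆ M')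
    (hdis : Disjoint M M') (hu : Unif G C M) (hu' : Unif G C' M') :
    HomogPair G C C' := by
  rcases C.eq_empty_or_nonempty with rfl | ⟨x₀, hx₀⟩
  · left; intro x hx; exact absurd hx (Set.notMem_empty x)
  rcases C'.eq_empty_or_nonempty with rfl | ⟨y₀, hy₀⟩
  · left; intro x hx y hy; exact absurd hy (Set.notMem_empty y)
  have key : ∀ x ∈ C, ∀ y ∈ C', (G.Adj x y ↔ G.Adj x₀ y₀) := by
    intro x hx y hy
    have hyM : y ∉ M := fun hyM => (Set.disjoint_left.mp hdis hyM) (hC' hy)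
    have hx0M' : x₀ ∉ M' := fun hm => (Set.disjoint_left.mp hdis (hC hx₀)) hm
    have h1 : G.Adj x y ↔ G.Adj x₀ y := hu x hx x₀ hx₀ y hyM
    have h2 : G.Adj y x₀ ↔ G.Adj y₀ x₀ := hu' y hy y₀ hy₀ x₀ hx0M'
    rw [h1, G.adj_comm, h2, G.adj_comm]
  by_cases hadj : G.Adj x₀ y₀
  · left; intro x hx y hy; exact (key x hx y hy).mpr hadj
  · right; intro x hx y hy hxy; exact hadj ((key x hx y hy).mp hxy)

/-- Classes of `X` by equal neighbourhood outside `X`. -/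
def clsOf (X : Set V) : Set (Set V) :=
  {C | ∃ v ∈ X, C = {u | u ∈ X ∧ ∀ y, y ∉ X → (G.Adj u y ↔ G.Adj v y)}}

def singlesOf (X : Set V) : Set (Set V) := {C | ∃ v ∈ X, C = {v}}

def PartOf (Q : Set (Set V)) (X : Set V) : Prop :=
  (∀ C ∈ Q, C.Nonempty) ∧ (∀ C ∈ Q, ∀ C' ∈ Q, C = C' ∨ Disjoint C C') ∧ ⋃₀ Q = X

def MStep (A B : Set (Set V)) : Prop :=
  ∃ X Y, X ∈ B ∧ Y ∈ B ∧ X ≠ Y ∧ A = (B \ {X, Y}) ∪ {X ∪ Y}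

def GoodIn (b : ℕ) (Q : Set (Set V)) (X : Set V) : Prop :=
  ∃ M : Set V → Set V,
    (∀ C ∈ Q, C ⊆ M C ∧ M C ⊆ X ∧ Unif G C (M C)) ∧
    (∀ C ∈ Q, ∀ C' ∈ Q, M C = M C' ∨ Disjoint (M C) (M C')) ∧
    (∀ C ∈ Q, {C' | C' ∈ Q ∧ M C' = M C}.ncard ≤ b)

variable {G}

lemma GoodIn.mono {b b' : ℕ} {Q : Set (Set V)} {X : Set V} (h : GoodIn G b Q X)
    (hb : b ≤ b') : GoodIn G b' Q X := by
  obtain ⟨M, h1, h2, h3⟩ := h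
  exact ⟨M, h1, h2, fun C hC => le_trans (h3 C hC) hb⟩

lemma wc_le_of_good [Fintype V] {b : ℕ} {Q : Set (Set V)}
    (h : GoodIn G b Q Set.univ) : wc G Q ≤ b := by
  obtain ⟨M, h1, h2, h3⟩ := h
  apply csSup_le'
  rintro m ⟨C, hC, rfl⟩
  have key : {Y | Relation.ReflTransGen (RedAdj G Q) C Y} ⊆ {C' | C' ∈ Q ∧ M C' = M C} := by
    intro Y hY
    induction hY with
    | refl => exact ⟨hC, rfl⟩
    | tail hab hbc ih =>
      obtain ⟨hbQ, hcQ, hor⟩ := hbc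
      rcases hor with ⟨rfl, _⟩ | ⟨hne, hnh⟩
      · exact ih
      · refine ⟨hcQ, ?_⟩
        rcases h2 _ hbQ _ hcQ with heq | hdis
        · rw [← heq]; exact ih.2
        · exact absurd (homog_of_unif G (h1 _ hbQ).1 (h1 _ hcQ).1 hdis
            (h1 _ hbQ).2.2 (h1 _ hcQ).2.2) hnh
  exact le_trans (Set.ncard_le_ncard key (Set.toFinite _)) (h3 C hC)

end Helpers

lemma PartOf.subset_of_mem {Q : Set (Set V)} {X C : Set V} (h : PartOf Q X) (hC : C ∈ Q) :
    C ⊆ X := h.2.2 ▸ Set.subset_sUnion_of_mem hC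

lemma PartOf.union {Q R : Set (Set V)} {X Y : Set V} (hQ : PartOf Q X) (hR : PartOf R Y)
    (hdis : Disjoint X Y) : PartOf (Q ∪ R) (X ∪ Y) := by
  refine ⟨?_, ?_, ?_⟩
  · rintro C (hC | hC)
    exacts [hQ.1 C hC, hR.1 C hC]
  · rintro C (hC | hC) C' (hC' | hC')
    · exact hQ.2.1 C hC C' hC'
    · exact Or.inr (Set.disjoint_of_subset (hQ.subset_of_mem hC) (hR.subset_of_mem hC') hdis)
    · exact Or.inr (Set.disjoint_of_subset (hR.subset_of_mem hC) (hQ.subset_of_mem hC') hdis.symm)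
    · exact hR.2.1 C hC C' hC'
  · rw [Set.sUnion_union, hQ.2.2, hR.2.2]

lemma PartOf.eq_of_subset {Q R : Set (Set V)} {X : Set V} (hQ : PartOf Q X) (hR : PartOf R X)
    (hsub : Q ⊆ R) : Q = R := by
  refine Set.Subset.antisymm hsub ?_
  intro D hD
  obtain ⟨x, hx⟩ := hR.1 D hD
  have hxX : x ∈ X := hR.subset_of_mem hD hx
  rw [← hQ.2.2] at hxX
  obtain ⟨C, hC, hxC⟩ := hxX
  rcases hR.2.1 D hD C (hsub hC) with rfl | hdis
  · exact hC
  · exact absurd hx (fun hx => Set.disjoint_left.mp hdis hx hxC)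

lemma mstep_partOf {Q : Set (Set V)} {X C C' : Set V} (hQ : PartOf Q X)
    (hC : C ∈ Q) (hC' : C' ∈ Q) (hne : C ≠ C') :
    PartOf ((Q \ {C, C'}) ∪ {C ∪ C'}) X := by
  refine ⟨?_, ?_, ?_⟩
  · rintro D (⟨hD, -⟩ | hD)
    · exact hQ.1 D hD
    · rcases hD with rfl
      exact (hQ.1 C hC).mono Set.subset_union_left
  · have key : ∀ D ∈ Q, D ∉ ({C, C'} : Set (Set V)) → Disjoint D (C ∪ C') := by
      intro D hD hDn
      simp only [Set.mem_insert_iff, Set.mem_singleton_iff, not_or] at hDn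
      refine Set.disjoint_union_right.mpr ⟨?_, ?_⟩
      · rcases hQ.2.1 D hD C hC with rfl | hd
        exacts [absurd rfl hDn.1, hd]
      · rcases hQ.2.1 D hD C' hC' with rfl | hd
        exacts [absurd rfl hDn.2, hd]
    rintro D (⟨hD, hDn⟩ | hD) D' (⟨hD', hDn'⟩ | hD')
    · exact hQ.2.1 D hD D' hD'
    · rcases hD' with rfl
      exact Or.inr (key D hD hDn)
    · rcases hD with rfl
      exact Or.inr (key D' hD' hDn').symm
    · rcases hD with rfl; rcases hD' with rfl; exact Or.inl rfl
  · rw [Set.sUnion_union, Set.sUnion_singleton, ← hQ.2.2]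
    apply Set.Subset.antisymm
    · apply Set.union_subset
      · exact Set.sUnion_mono Set.diff_subset
      · exact Set.union_subset (Set.subset_sUnion_of_mem hC) (Set.subset_sUnion_of_mem hC')
    · rintro x ⟨D, hD, hxD⟩
      by_cases hmem : D ∈ ({C, C'} : Set (Set V))
      · rcases hmem with rfl | rfl
        exacts [Or.inr (Or.inl hxD), Or.inr (Or.inr hxD)]
      · exact Or.inl ⟨D, ⟨hD, hmem⟩, hxD⟩

lemma mstep_ncard {Q : Set (Set V)} {X C C' : Set V} [Finite V] (hQ : PartOf Q X)
    (hC : C ∈ Q) (hC' : C' ∈ Q) (hne : C ≠ C') :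
    ((Q \ {C, C'}) ∪ {C ∪ C'}).ncard + 1 = Q.ncard := by
  have hnotin : (C ∪ C') ∉ Q \ {C, C'} := by
    rintro ⟨hZ, hZn⟩
    simp only [Set.mem_insert_iff, Set.mem_singleton_iff, not_or] at hZn
    rcases hQ.2.1 C hC _ hZ with heq | hd
    · exact hZn.1 heq.symm
    · obtain ⟨x, hx⟩ := hQ.1 C hC
      exact Set.disjoint_left.mp hd hx (Set.mem_union_left _ hx)
  have hpair : ({C, C'} : Set (Set V)) ⊆ Q := by
    rintro Z (rfl | rfl)
    exacts [hC, hC']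
  have h2 : ({C, C'} : Set (Set V)).ncard = 2 := Set.ncard_pair hne
  have hd : (Q \ {C, C'}).ncard = Q.ncard - 2 := by
    rw [Set.ncard_diff hpair (Set.toFinite _), h2]
  have hle : 2 ≤ Q.ncard := by
    rw [← h2]; exact Set.ncard_le_ncard hpair (Set.toFinite _)
  rw [Set.union_singleton, Set.ncard_insert_of_notMem hnotin (Set.toFinite _), hd]
  omega

open List in
lemma glue {α : Type*} {r : α → α → Prop} {l₁ l₂ : List α} (h₁ : Chain' r l₁)
    (h₂ : Chain' r l₂) (hne₁ : l₁ ≠ []) (hne₂ : l₂ ≠ [])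
    (hj : l₁.getLast? = l₂.head?) :
    Chain' r (l₁ ++ l₂.tail) ∧ (l₁ ++ l₂.tail).head? = l₁.head? ∧
    (l₁ ++ l₂.tail).getLast? = l₂.getLast? ∧
    (∀ x ∈ l₁ ++ l₂.tail, x ∈ l₁ ∨ x ∈ l₂) := by
  obtain ⟨c, t, rfl⟩ := List.exists_cons_of_ne_nil hne₂
  simp only [List.tail_cons]
  have hj' : l₁.getLast? = some c := by simpa using hj
  refine ⟨?_, ?_, ?_, ?_⟩
  · refine h₁.append (h₂.tail) ?_
    intro x hx y hy
    rw [hj'] at hx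
    simp only [Option.mem_def, Option.some_inj] at hx
    subst hx
    exact (List.isChain_cons.mp h₂).1 y hy
  · exact List.head?_append_of_ne_nil _ hne₁
  · rcases List.eq_nil_or_concat t with rfl | ⟨t', z, rfl⟩
    · simp only [List.append_nil, hj']
      simp [List.getLast?_singleton]
    · have hz : ∀ (l : List α), (l ++ [z]).getLast? = some z := by
        intro l
        rw [List.getLast?_append]; rfl
      rw [List.concat_eq_append, ← List.append_assoc, hz]
      have : c :: (t' ++ [z]) = (c :: t') ++ [z] := by simp
      rw [this, hz]
  · intro x hx
    rcases List.mem_append.mp hx with hx | hx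
    · exact Or.inl hx
    · exact Or.inr (List.mem_cons_of_mem _ hx)

lemma mstep_union {A B S : Set (Set V)} (h : MStep A B) (hB : ∀ Z ∈ B, Z ∉ S) :
    MStep (A ∪ S) (B ∪ S) := by
  obtain ⟨X, Y, hX, hY, hne, rfl⟩ := h
  refine ⟨X, Y, Or.inl hX, Or.inl hY, hne, ?_⟩
  have hXS : X ∉ S := hB X hX
  have hYS : Y ∉ S := hB Y hY
  ext Z
  have h1 : Z ∈ S → Z ≠ X := fun hs he => hXS (he ▸ hs)
  have h2 : Z ∈ S → Z ≠ Y := fun hs he => hYS (he ▸ hs)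
  simp only [Set.mem_union, Set.mem_diff, Set.mem_insert_iff, Set.mem_singleton_iff, not_or]
  tauto

open List in
lemma chain'_map_union {S : Set (Set V)} :
    ∀ (L : List (Set (Set V))), Chain' MStep L → (∀ Q ∈ L, ∀ Z ∈ Q, Z ∉ S) →
      Chain' MStep (L.map (· ∪ S))
  | [], _, _ => List.isChain_nil
  | [a], _, _ => List.isChain_singleton _
  | a :: b :: l, h, hmem => by
    rw [List.map_cons, List.map_cons]
    simp only [List.Chain', List.isChain_cons_cons]
    simp only [List.Chain', List.isChain_cons_cons] at h
    constructor
    · exact mstep_union h.1 (hmem b (by simp))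
    · have := chain'_map_union (b :: l) h.2 (fun Q hQ => hmem Q (List.mem_cons_of_mem _ hQ))
      simpa [List.Chain'] using this

open List in
lemma chain_card [Finite V] :
    ∀ (L : List (Set (Set V))) (H Z : Set (Set V)), Chain' MStep L →
      (∀ Q ∈ L, PartOf Q Set.univ) → L.head? = some H → L.getLast? = some Z →
      Z.ncard + 1 = H.ncard + L.length
  | [], _, _, _, _, hH, _ => by simp at hH
  | [a], H, Z, _, _, hH, hZ => by
    simp only [List.head?_cons, Option.some_inj] at hH
    simp only [List.getLast?_singleton, Option.some_inj] at hZ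
    subst hH; subst hZ; simp
  | a :: b :: l, H, Z, h, hp, hH, hZ => by
    simp only [List.head?_cons, Option.some_inj] at hH
    subst hH
    simp only [List.Chain', List.isChain_cons_cons] at h
    obtain ⟨X', Y', hX', hY', hne, hEq⟩ := h.1
    have hcard : a.ncard + 1 = b.ncard := by
      have := mstep_ncard (hp b (by simp)) hX' hY' hne
      rw [← hEq] at this; exact this
    have hZ' : (b :: l).getLast? = some Z := by
      rw [← hZ]; symm
      exact List.getLast?_cons_cons ..
    have := chain_card (b :: l) b Z h.2 (fun Q hQ => hp Q (List.mem_cons_of_mem _ hQ))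
      (by simp) hZ'
    simp only [List.length_cons] at this ⊢
    omega

open List in
lemma mergeDown [Finite V] (n : ℕ) : ∀ (Q Qs : Set (Set V)) (XX : Set V),
    PartOf Q XX → PartOf Qs XX → (∀ C ∈ Q, ∃ D ∈ Qs, C ⊆ D) → Q.ncard ≤ n →
    ∃ L : List (Set (Set V)), L ≠ [] ∧ Chain' MStep L ∧ L.head? = some Qs ∧
      L.getLast? = some Q ∧
      ∀ R ∈ L, PartOf R XX ∧ (∀ C ∈ R, ∃ D ∈ Qs, C ⊆ D) ∧ R.ncard ≤ Q.ncard := by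
  induction n with
  | zero =>
    intro Q Qs XX hQ hQs href hn
    have hQe : Q = ∅ := by
      rw [← Set.ncard_eq_zero (Set.toFinite Q)]; omega
    subst hQe
    have hXe : XX = ∅ := by rw [← hQ.2.2]; simp
    have hQse : Qs = ∅ := by
      ext D; simp only [Set.mem_empty_iff_false, iff_false]
      intro hD
      obtain ⟨x, hx⟩ := hQs.1 D hD
      have := hQs.subset_of_mem hD hx
      rw [hXe] at this; exact this
    subst hQse
    refine ⟨[∅], by simp, List.isChain_singleton _, by simp, by simp, fun R hR => ?_⟩
    simp only [List.mem_singleton] at hR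
    subst hR
    exact ⟨hQ, by simp, le_refl _⟩
  | succ n ih =>
    intro Q Qs XX hQ hQs href hn
    by_cases heq : Q = Qs
    · subst heq
      refine ⟨[Q], by simp, List.isChain_singleton _, by simp, by simp, fun R hR => ?_⟩
      simp only [List.mem_singleton] at hR
      subst hR
      exact ⟨hQ, fun C hC => ⟨C, hC, le_refl _⟩, le_refl _⟩
    · have hex : ∃ C ∈ Q, C ∉ Qs := by
        by_contra h'
        push_neg at h'
        exact heq (hQ.eq_of_subset hQs h')
      obtain ⟨C, hC, hCn⟩ := hex
      obtain ⟨D, hD, hCD⟩ := href C hC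
      have hCne : C ≠ D := fun h => hCn (h ▸ hD)
      have hssub : C ⊂ D := Set.ssubset_iff_subset_ne.mpr ⟨hCD, hCne⟩
      obtain ⟨x, hxD, hxC⟩ := Set.exists_of_ssubset hssub
      have hxX : x ∈ XX := hQs.subset_of_mem hD hxD
      rw [← hQ.2.2] at hxX
      obtain ⟨C', hC', hxC'⟩ := hxX
      have hne : C ≠ C' := fun h => hxC (h ▸ hxC')
      obtain ⟨D', hD', hC'D'⟩ := href C' hC'
      have hDD : D' = D := by
        rcases hQs.2.1 D' hD' D hD with h | h
        · exact h
        · exact absurd hxD (fun hh => Set.disjoint_left.mp h (hC'D' hxC') hh)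
      subst hDD
      set Q' := (Q \ {C, C'}) ∪ {C ∪ C'} with hQ'def
      have hQ' : PartOf Q' XX := mstep_partOf hQ hC hC' hne
      have href' : ∀ E ∈ Q', ∃ D ∈ Qs, E ⊆ D := by
        rintro E (⟨hE, -⟩ | hE)
        · exact href E hE
        · rcases hE with rfl
          exact ⟨D', hD', Set.union_subset hCD hC'D'⟩
      have hcard : Q'.ncard + 1 = Q.ncard := mstep_ncard hQ hC hC' hne
      obtain ⟨L', hLne, hLc, hLh, hLl, hLm⟩ :=
        ih Q' Qs XX hQ' hQs href' (by omega)
      refine ⟨L' ++ [Q], by simp, ?_, ?_, ?_, ?_⟩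
      · refine hLc.append (List.isChain_singleton _) ?_
        intro x hx y hy
        rw [hLl] at hx
        simp only [Option.mem_def, Option.some_inj] at hx hy
        simp only [List.head?_cons, Option.some_inj] at hy
        subst hx; subst hy
        exact ⟨C, C', hC, hC', hne, rfl⟩
      · rw [List.head?_append_of_ne_nil _ hLne, hLh]
      · rw [List.getLast?_append]; rfl
      · intro R hR
        rcases List.mem_append.mp hR with hR | hR
        · obtain ⟨h1, h2, h3⟩ := hLm R hR
          exact ⟨h1, h2, by omega⟩
        · simp only [List.mem_singleton] at hR
          subst hR
          exact ⟨hQ, href, le_refl _⟩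

section Tree
variable {N : Type*} {T : SimpleGraph N}

lemma notReach_bridge (hT : T.IsTree) {t p : N} (h : T.Adj t p) :
    ¬ (T.deleteEdges {s(t,p)}).Reachable t p := by
  have hb := (SimpleGraph.isAcyclic_iff_forall_adj_isBridge.mp hT.IsAcyclic) h
  rw [SimpleGraph.isBridge_iff] at hb
  exact hb

lemma exists_walk_avoid {G' : SimpleGraph N} {x a z : N} (h : G'.Reachable x a)
    (hz : ¬ G'.Reachable z a) : ∃ W : G'.Walk x a, z ∉ W.support := by
  classical
  obtain ⟨W⟩ := h
  exact ⟨W, fun hzs => hz ⟨W.dropUntil z hzs⟩⟩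

lemma reach_of_walk_avoid {e : Sym2 N} {x a : N} (W : (T.deleteEdges {e}).Walk x a)
    {z : N} (hz : z ∉ W.support) (w : N) :
    (T.deleteEdges {s(z,w)}).Reachable x a := by
  refine ⟨W.transfer _ ?_⟩
  intro e' he'
  have h1 : e' ∈ (T.deleteEdges {e}).edgeSet := W.edges_subset_edgeSet he'
  rw [SimpleGraph.edgeSet_deleteEdges] at h1 ⊢
  refine ⟨h1.1, ?_⟩
  simp only [Set.mem_singleton_iff]
  rintro rfl
  exact hz (W.fst_mem_support_of_mem_edges he')

lemma swap_single (a b : N) : ({s(a,b)} : Set (Sym2 N)) = {s(b,a)} := by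
  rw [Sym2.eq_swap]

lemma side_mono (hT : T.IsTree) {t p c : N} (h1 : T.Adj t p) (h2 : T.Adj c t)
    (hcp : c ≠ p) {x : N} (hx : (T.deleteEdges {s(c,t)}).Reachable x c) :
    (T.deleteEdges {s(t,p)}).Reachable x t := by
  have hnb : ¬ (T.deleteEdges {s(c,t)}).Reachable t c :=
    fun hr => notReach_bridge hT h2 hr.symm
  obtain ⟨W, hW⟩ := exists_walk_avoid hx hnb
  have hr : (T.deleteEdges {s(t,p)}).Reachable x c := reach_of_walk_avoid W hW p
  have hadj : (T.deleteEdges {s(t,p)}).Adj c t := by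
    rw [SimpleGraph.deleteEdges_adj]
    refine ⟨h2, ?_⟩
    simp only [Set.mem_singleton_iff, Sym2.eq_iff]
    push_neg
    exact ⟨fun hct => absurd hct h2.ne, fun hcp' => absurd hcp' hcp⟩
  exact hr.trans hadj.reachable

lemma side_disj (hT : T.IsTree) {t c₁ c₂ : N} (h1 : T.Adj c₁ t) (h2 : T.Adj c₂ t)
    (hne : c₁ ≠ c₂) {x : N} (hx1 : (T.deleteEdges {s(c₁,t)}).Reachable x c₁)
    (hx2 : (T.deleteEdges {s(c₂,t)}).Reachable x c₂) : False := by
  have hnb : ¬ (T.deleteEdges {s(c₁,t)}).Reachable t c₁ :=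
    fun hr => notReach_bridge hT h1 hr.symm
  obtain ⟨W, hW⟩ := exists_walk_avoid hx1 hnb
  have hr1 : (T.deleteEdges {s(t,c₂)}).Reachable x c₁ := reach_of_walk_avoid W hW c₂
  rw [swap_single t c₂] at hr1
  have hadj : (T.deleteEdges {s(c₂,t)}).Adj t c₁ := by
    rw [SimpleGraph.deleteEdges_adj]
    refine ⟨h1.symm, ?_⟩
    simp only [Set.mem_singleton_iff, Sym2.eq_iff]
    push_neg
    refine ⟨fun htc => absurd htc.symm h2.ne, fun _ => hne⟩
  have : (T.deleteEdges {s(c₂,t)}).Reachable t c₂ :=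
    (hadj.reachable.trans hr1.symm).trans hx2
  exact notReach_bridge hT h2 this.symm

lemma side_cover (hT : T.IsTree) {t p : N} (h : T.Adj t p) {x : N}
    (hx : (T.deleteEdges {s(t,p)}).Reachable x t) (hxt : x ≠ t) :
    ∃ c, T.Adj c t ∧ c ≠ p ∧ (T.deleteEdges {s(c,t)}).Reachable x c := by
  classical
  have key : ∀ (W : (T.deleteEdges {s(t,p)}).Walk t x), W.IsPath →
      ∃ c, T.Adj c t ∧ c ≠ p ∧ (T.deleteEdges {s(c,t)}).Reachable x c := by
    intro W hWp
    cases W with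
    | nil => exact absurd rfl hxt
    | @cons _ y _ hadj W' =>
      rw [SimpleGraph.Walk.cons_isPath_iff] at hWp
      rw [SimpleGraph.deleteEdges_adj] at hadj
      have hyp : y ≠ p := fun hyp => hadj.2 (by rw [hyp]; exact rfl)
      refine ⟨y, hadj.1.symm, hyp, ?_⟩
      have := reach_of_walk_avoid W' hWp.2 y
      rw [swap_single t y] at this
      exact this.symm
  obtain ⟨W₀⟩ := hx.symm
  exact key W₀.bypass W₀.bypass_isPath

lemma leaf_side (hdeg : T.neighborSet ℓ = {p}) {x : N}
    (hx : (T.deleteEdges {s(ℓ,p)}).Reachable x ℓ) : x = ℓ := by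
  obtain ⟨W⟩ := hx.symm
  cases W with
  | nil => rfl
  | @cons _ y _ hadj W' =>
    rw [SimpleGraph.deleteEdges_adj] at hadj
    have : y ∈ T.neighborSet ℓ := hadj.1
    rw [hdeg, Set.mem_singleton_iff] at this
    subst this
    exact absurd rfl hadj.2

lemma walk_dichot {u v : N} : ∀ {x : N}, T.Walk x u →
    (T.deleteEdges {s(u,v)}).Reachable x u ∨ (T.deleteEdges {s(u,v)}).Reachable x v
  | _, SimpleGraph.Walk.nil => Or.inl (SimpleGraph.Reachable.refl _)
  | x, @SimpleGraph.Walk.cons _ _ _ y _ hadj W' => by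
    by_cases he : s(x, y) = s(u, v)
    · rw [Sym2.eq_iff] at he
      rcases he with ⟨rfl, rfl⟩ | ⟨rfl, rfl⟩
      · exact Or.inl (SimpleGraph.Reachable.refl _)
      · exact Or.inr (SimpleGraph.Reachable.refl _)
    · have hadj' : (T.deleteEdges {s(u,v)}).Adj x y := by
        rw [SimpleGraph.deleteEdges_adj]
        exact ⟨hadj, by simpa using he⟩
      rcases walk_dichot W' with hr | hr
      · exact Or.inl (hadj'.reachable.trans hr)
      · exact Or.inr (hadj'.reachable.trans hr)

lemma side_dichot (hT : T.IsTree) {u v : N} (x : N) :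
    (T.deleteEdges {s(u,v)}).Reachable x u ∨ (T.deleteEdges {s(u,v)}).Reachable x v := by
  obtain ⟨W⟩ := hT.isConnected.preconnected x u
  exact walk_dichot W

end Tree

section Cls
variable {V : Type*} (G : SimpleGraph V)

lemma mem_clsOf_self {X : Set V} {v : V} (hv : v ∈ X) :
    v ∈ {u | u ∈ X ∧ ∀ y, y ∉ X → (G.Adj u y ↔ G.Adj v y)} :=
  ⟨hv, fun _ _ => Iff.rfl⟩

lemma partOf_clsOf (X : Set V) : PartOf (clsOf G X) X := by
  refine ⟨?_, ?_, ?_⟩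
  · rintro C ⟨v, hv, rfl⟩
    exact ⟨v, mem_clsOf_self G hv⟩
  · rintro C ⟨v, hv, rfl⟩ C' ⟨v', hv', rfl⟩
    by_cases hdis : Disjoint {u | u ∈ X ∧ ∀ y, y ∉ X → (G.Adj u y ↔ G.Adj v y)}
        {u | u ∈ X ∧ ∀ y, y ∉ X → (G.Adj u y ↔ G.Adj v' y)}
    · exact Or.inr hdis
    · left
      rw [Set.not_disjoint_iff] at hdis
      obtain ⟨u, ⟨huX, hu⟩, ⟨-, hu'⟩⟩ := hdis
      ext z
      simp only [Set.mem_setOf_eq]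
      constructor
      · rintro ⟨hzX, hz⟩
        exact ⟨hzX, fun y hy => (hz y hy).trans ((hu y hy).symm.trans (hu' y hy))⟩
      · rintro ⟨hzX, hz⟩
        exact ⟨hzX, fun y hy => (hz y hy).trans ((hu' y hy).symm.trans (hu y hy))⟩
  · apply Set.Subset.antisymm
    · rintro x ⟨C, ⟨v, hv, rfl⟩, hx⟩
      exact hx.1
    · intro x hx
      exact ⟨_, ⟨x, hx, rfl⟩, mem_clsOf_self G hx⟩

lemma clsOf_unif {X C : Set V} (hC : C ∈ clsOf G X) : Unif G C X := by
  obtain ⟨v, hv, rfl⟩ := hC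
  intro x hx x' hx' y hy
  exact (hx.2 y hy).trans (hx'.2 y hy).symm

lemma partOf_singlesOf (X : Set V) : PartOf (singlesOf X) X := by
  refine ⟨?_, ?_, ?_⟩
  · rintro C ⟨v, hv, rfl⟩
    exact ⟨v, rfl⟩
  · rintro C ⟨v, hv, rfl⟩ C' ⟨v', hv', rfl⟩
    rcases eq_or_ne v v' with rfl | hne
    · exact Or.inl rfl
    · exact Or.inr (by simpa using hne)
  · apply Set.Subset.antisymm
    · rintro x ⟨C, ⟨v, hv, rfl⟩, hx⟩
      rwa [Set.mem_singleton_iff.mp hx]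
    · intro x hx
      exact ⟨{x}, ⟨x, hx, rfl⟩, rfl⟩

lemma singlesOf_union (X Y : Set V) : singlesOf (X ∪ Y) = singlesOf X ∪ singlesOf Y := by
  ext C
  constructor
  · rintro ⟨v, (hv | hv), rfl⟩
    exacts [Or.inl ⟨v, hv, rfl⟩, Or.inr ⟨v, hv, rfl⟩]
  · rintro (⟨v, hv, rfl⟩ | ⟨v, hv, rfl⟩)
    exacts [⟨v, Or.inl hv, rfl⟩, ⟨v, Or.inr hv, rfl⟩]

variable {G}

lemma goodIn_clsOf [Finite V] {b : ℕ} {X : Set V} (hb : (clsOf G X).ncard ≤ b) :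
    GoodIn G b (clsOf G X) X := by
  refine ⟨fun _ => X, fun C hC => ⟨(partOf_clsOf G X).subset_of_mem hC, le_refl _,
    clsOf_unif G hC⟩, fun C hC C' hC' => Or.inl rfl, fun C hC => ?_⟩
  have hsub : {C' | C' ∈ clsOf G X ∧ X = X} ⊆ clsOf G X := fun C' hC' => hC'.1
  exact le_trans (Set.ncard_le_ncard hsub (Set.toFinite _)) hb

lemma goodIn_singlesOf {b : ℕ} {X : Set V} (hb : 1 ≤ b) [Finite V] :
    GoodIn G b (singlesOf X) X := by
  refine ⟨id, ?_, ?_, ?_⟩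
  · rintro C ⟨v, hv, rfl⟩
    exact ⟨le_refl _, Set.singleton_subset_iff.mpr hv,
      fun x hx x' hx' y hy => by
        rw [Set.mem_singleton_iff.mp hx, Set.mem_singleton_iff.mp hx']⟩
  · rintro C ⟨v, hv, rfl⟩ C' ⟨v', hv', rfl⟩
    rcases eq_or_ne v v' with rfl | hne
    · exact Or.inl rfl
    · exact Or.inr (by simpa using hne)
  · rintro C ⟨v, hv, rfl⟩
    have hsub : {C' | C' ∈ singlesOf X ∧ id C' = id {v}} ⊆ {({v} : Set V)} := by
      intro C' hC'
      exact Set.mem_singleton_iff.mpr hC'.2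
    exact le_trans (Set.ncard_le_ncard hsub (Set.toFinite _)) (by simpa using hb)

lemma goodIn_union [Finite V] {b : ℕ} {Q R : Set (Set V)} {X₁ X₂ : Set V}
    (hdis : Disjoint X₁ X₂) (hGQ : GoodIn G b Q X₂) (hQne : ∀ C ∈ Q, C.Nonempty)
    (hGR : GoodIn G b R X₁) (hRne : ∀ C ∈ R, C.Nonempty) :
    GoodIn G b (Q ∪ R) (X₁ ∪ X₂) := by
  classical
  obtain ⟨M₂, hM2a, hM2b, hM2c⟩ := hGQ
  obtain ⟨M₁, hM1a, hM1b, hM1c⟩ := hGR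
  have hQR : ∀ C, C ∈ Q → C ∈ R → False := by
    intro C hCQ hCR
    obtain ⟨x, hx⟩ := hQne C hCQ
    have h1 : x ∈ X₂ := (hM2a C hCQ).2.1 ((hM2a C hCQ).1 hx)
    have h2 : x ∈ X₁ := (hM1a C hCR).2.1 ((hM1a C hCR).1 hx)
    exact Set.disjoint_left.mp hdis h2 h1
  refine ⟨fun C => if C ∈ Q then M₂ C else M₁ C, ?_, ?_, ?_⟩
  · rintro C (hC | hC) <;> dsimp only
    · rw [if_pos hC]
      exact ⟨(hM2a C hC).1, (hM2a C hC).2.1.trans Set.subset_union_right, (hM2a C hC).2.2⟩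
    · rw [if_neg (fun h => hQR C h hC)]
      exact ⟨(hM1a C hC).1, (hM1a C hC).2.1.trans Set.subset_union_left, (hM1a C hC).2.2⟩
  · rintro C (hC | hC) C' (hC' | hC') <;> dsimp only
    · rw [if_pos hC, if_pos hC']; exact hM2b C hC C' hC'
    · rw [if_pos hC, if_neg (fun h => hQR C' h hC')]
      exact Or.inr (Set.disjoint_of_subset (hM2a C hC).2.1 (hM1a C' hC').2.1 hdis.symm)
    · rw [if_neg (fun h => hQR C h hC), if_pos hC']
      exact Or.inr (Set.disjoint_of_subset (hM1a C hC).2.1 (hM2a C' hC').2.1 hdis)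
    · rw [if_neg (fun h => hQR C h hC), if_neg (fun h => hQR C' h hC')]
      exact hM1b C hC C' hC'
  · have key : ∀ C ∈ Q, ∀ C' ∈ R, M₁ C' ≠ M₂ C := by
      intro C hC C' hC' heq
      obtain ⟨x, hx⟩ := hRne C' hC'
      have h1 : x ∈ X₁ := (hM1a C' hC').2.1 ((hM1a C' hC').1 hx)
      have h2 : x ∈ X₂ := (hM2a C hC).2.1 (heq ▸ ((hM1a C' hC').1 hx))
      exact Set.disjoint_left.mp hdis h1 h2
    rintro C (hC | hC) <;> dsimp only
    · rw [if_pos hC]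
      refine le_trans (le_of_eq (congrArg Set.ncard ?_)) (hM2c C hC)
      ext C'
      simp only [Set.mem_setOf_eq, Set.mem_union]
      constructor
      · rintro ⟨(hC' | hC'), heq⟩
        · simp only [if_pos hC'] at heq; exact ⟨hC', heq⟩
        · simp only [if_neg (fun h => hQR C' h hC')] at heq
          exact absurd heq (key C hC C' hC')
      · rintro ⟨hC', heq⟩
        exact ⟨Or.inl hC', by simp only [if_pos hC']; exact heq⟩
    · rw [if_neg (fun h => hQR C h hC)]
      refine le_trans (le_of_eq (congrArg Set.ncard ?_)) (hM1c C hC)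
      ext C'
      simp only [Set.mem_setOf_eq, Set.mem_union]
      constructor
      · rintro ⟨(hC' | hC'), heq⟩
        · simp only [if_pos hC'] at heq
          exact absurd heq.symm (key C' hC' C hC)
        · simp only [if_neg (fun h => hQR C' h hC')] at heq
          exact ⟨hC', heq⟩
      · rintro ⟨hC', heq⟩
        exact ⟨Or.inr hC', by simp only [if_neg (fun h => hQR C' h hC')]; exact heq⟩

lemma goodIn_univ [Finite V] {b : ℕ} {R : Set (Set V)} (hR : R.ncard ≤ b) :
    GoodIn G b R (Set.univ : Set V) := by
  refine ⟨fun _ => Set.univ, ?_, fun C hC C' hC' => Or.inl rfl, fun C hC => ?_⟩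
  · intro C hC
    exact ⟨Set.subset_univ _, le_refl _, fun x hx x' hx' y hy => absurd (Set.mem_univ y) hy⟩
  · refine le_trans (Set.ncard_le_ncard (fun C' hC' => hC'.1) (Set.toFinite _)) hR

lemma goodIn_refine [Finite V] {b : ℕ} {R : Set (Set V)} {X : Set V}
    (hR : PartOf R X) (href : ∀ C ∈ R, ∃ D ∈ clsOf G X, C ⊆ D) (hn : R.ncard ≤ b) :
    GoodIn G b R X := by
  refine ⟨fun _ => X, ?_, fun C hC C' hC' => Or.inl rfl, fun C hC => ?_⟩
  · intro C hC
    obtain ⟨D, hD, hCD⟩ := href C hC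
    exact ⟨hR.subset_of_mem hC, le_refl _, Unif.mono G (clsOf_unif G hD) hCD⟩
  · refine le_trans (Set.ncard_le_ncard (fun C' hC' => hC'.1) (Set.toFinite _)) hn

end Cls

section BD
variable {V : Type*} [Fintype V] {G : SimpleGraph V}

lemma clsOf_ncard_le {d : ℕ} {X : Set V} (hb : boolW G X Xᶜ ≤ (d : ℝ)) :
    (clsOf G X).ncard ≤ 2 ^ d := by
  classical
  set tgt := {T : Set V | ∃ S ⊆ X, T = {y ∈ Xᶜ | ∃ x ∈ S, G.Adj x y}} with htgt
  have hmem : ∀ v ∈ X, ({y ∈ Xᶜ | G.Adj v y}) ∈ tgt := by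
    intro v hv
    refine ⟨{v}, Set.singleton_subset_iff.mpr hv, ?_⟩
    ext y
    simp
  have h1 : 0 < tgt.ncard := by
    refine (Set.ncard_pos (Set.toFinite _)).mpr ?_
    exact ⟨_, ⟨∅, Set.empty_subset _, rfl⟩⟩
  have h2 : (tgt.ncard : ℝ) ≤ (2:ℝ) ^ (d:ℝ) := by
    refine (Real.logb_le_iff_le_rpow (by norm_num) (by exact_mod_cast h1)).mp ?_
    exact hb
  have h3 : tgt.ncard ≤ 2 ^ d := by
    rw [Real.rpow_natCast] at h2
    exact_mod_cast h2
  set f : Set V → Set V := fun C => {y ∈ Xᶜ | ∃ x ∈ C, G.Adj x y} with hf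
  have hfcl : ∀ v ∈ X, f {u | u ∈ X ∧ ∀ y, y ∉ X → (G.Adj u y ↔ G.Adj v y)}
      = {y ∈ Xᶜ | G.Adj v y} := by
    intro v hv
    ext y
    simp only [hf, Set.mem_setOf_eq, Set.mem_sep_iff, Set.mem_compl_iff]
    constructor
    · rintro ⟨hy, x, ⟨hxX, hx⟩, hadj⟩
      exact ⟨hy, (hx y hy).mp hadj⟩
    · rintro ⟨hy, hadj⟩
      exact ⟨hy, v, mem_clsOf_self G hv, hadj⟩
  have hmaps : ∀ C ∈ clsOf G X, f C ∈ tgt := by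
    rintro C ⟨v, hv, rfl⟩
    rw [hfcl v hv]
    exact hmem v hv
  have hinj : Set.InjOn f (clsOf G X) := by
    rintro C ⟨v, hv, rfl⟩ C' ⟨v', hv', rfl⟩ heq
    rw [hfcl v hv, hfcl v' hv'] at heq
    have hiff : ∀ y, y ∉ X → (G.Adj v y ↔ G.Adj v' y) := by
      intro y hy
      have := Set.ext_iff.mp heq y
      simp only [Set.mem_sep_iff, Set.mem_compl_iff] at this
      constructor
      · intro hadj; exact (this.mp ⟨hy, hadj⟩).2
      · intro hadj; exact (this.mpr ⟨hy, hadj⟩).2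
    ext u
    simp only [Set.mem_setOf_eq]
    constructor
    · rintro ⟨huX, hu⟩
      exact ⟨huX, fun y hy => (hu y hy).trans (hiff y hy)⟩
    · rintro ⟨huX, hu⟩
      exact ⟨huX, fun y hy => (hu y hy).trans (hiff y hy).symm⟩
  calc (clsOf G X).ncard = (f '' clsOf G X).ncard := (Set.ncard_image_of_injOn hinj).symm
    _ ≤ tgt.ncard := Set.ncard_le_ncard (fun T hT => by
        obtain ⟨C, hC, rfl⟩ := hT; exact hmaps C hC) (Set.toFinite _)
    _ ≤ 2 ^ d := h3

variable (B : BranchDecomp V)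

def SN (t p : B.N) : Set B.N := {x | (B.T.deleteEdges {s(t,p)}).Reachable x t}

lemma side_eq_pre (t p : B.N) : B.side t p = B.leaf ⁻¹' (SN B t p) := rfl

lemma exists_two_nbrs {t p : B.N} (hdeg : (B.T.neighborSet t).ncard = 3)
    (hp : B.T.Adj t p) :
    ∃ c₁ c₂, B.T.Adj c₁ t ∧ B.T.Adj c₂ t ∧ c₁ ≠ c₂ ∧ c₁ ≠ p ∧ c₂ ≠ p ∧
      (∀ c, B.T.Adj c t → c ≠ p → c = c₁ ∨ c = c₂) := by
  haveI := B.fin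
  have hpmem : p ∈ B.T.neighborSet t := hp
  have h2 : ((B.T.neighborSet t) \ {p}).ncard = 2 := by
    rw [Set.ncard_diff_singleton_of_mem hpmem, hdeg]
  obtain ⟨c₁, c₂, hne, hset⟩ := Set.ncard_eq_two.mp h2
  have hc₁ : c₁ ∈ B.T.neighborSet t \ {p} := by rw [hset]; exact Set.mem_insert _ _
  have hc₂ : c₂ ∈ B.T.neighborSet t \ {p} := by
    rw [hset]; exact Set.mem_insert_iff.mpr (Or.inr rfl)
  refine ⟨c₁, c₂, (hc₁.1 : B.T.Adj t c₁).symm, (hc₂.1 : B.T.Adj t c₂).symm, hne,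
    fun h => hc₁.2 h, fun h => hc₂.2 h, ?_⟩
  intro c hc hcp
  have : c ∈ B.T.neighborSet t \ {p} := ⟨hc.symm, hcp⟩
  rw [hset] at this
  exact this

lemma SN_mono {t p c : B.N} (hp : B.T.Adj t p) (hc : B.T.Adj c t) (hcp : c ≠ p) :
    SN B c t ⊆ SN B t p := fun _ hx => side_mono B.tree hp hc hcp hx

lemma SN_ssub {t p c : B.N} (hp : B.T.Adj t p) (hc : B.T.Adj c t) (hcp : c ≠ p) :
    SN B c t ⊂ SN B t p := by
  refine ⟨SN_mono B hp hc hcp, fun hsub => ?_⟩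
  have ht : t ∈ SN B t p := SimpleGraph.Reachable.refl _
  have : t ∈ SN B c t := hsub ht
  exact notReach_bridge B.tree hc (SimpleGraph.Reachable.symm this)

lemma side_sub {t p c : B.N} (hp : B.T.Adj t p) (hc : B.T.Adj c t) (hcp : c ≠ p) :
    B.side c t ⊆ B.side t p := by
  rw [side_eq_pre, side_eq_pre]
  exact Set.preimage_mono (SN_mono B hp hc hcp)

lemma leaf_ne_internal {w : V} {t : B.N} (hdeg : (B.T.neighborSet t).ncard = 3) :
    B.leaf w ≠ t := by
  intro heq
  have : B.leaf w ∈ Set.range B.leaf := Set.mem_range_self w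
  rw [B.leaf_range] at this
  rw [heq] at this
  simp only [Set.mem_setOf_eq] at this
  omega

lemma side_split {t p c₁ c₂ : B.N} (hp : B.T.Adj t p)
    (hdeg : (B.T.neighborSet t).ncard = 3)
    (hc₁ : B.T.Adj c₁ t) (hc₂ : B.T.Adj c₂ t) (hne : c₁ ≠ c₂) (h1p : c₁ ≠ p) (h2p : c₂ ≠ p)
    (hall : ∀ c, B.T.Adj c t → c ≠ p → c = c₁ ∨ c = c₂) :
    B.side t p = B.side c₁ t ∪ B.side c₂ t ∧ Disjoint (B.side c₁ t) (B.side c₂ t) := by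
  constructor
  · apply Set.Subset.antisymm
    · intro w hw
      have hx : (B.T.deleteEdges {s(t,p)}).Reachable (B.leaf w) t := hw
      obtain ⟨c, hc, hcp, hr⟩ := side_cover B.tree hp hx (leaf_ne_internal B hdeg)
      rcases hall c hc hcp with rfl | rfl
      · exact Or.inl hr
      · exact Or.inr hr
    · exact Set.union_subset (side_sub B hp hc₁ h1p) (side_sub B hp hc₂ h2p)
  · rw [Set.disjoint_left]
    intro w hw1 hw2
    exact side_disj B.tree hc₁ hc₂ hne hw1 hw2

lemma side_nonempty : ∀ (k : ℕ) {t p : B.N}, B.T.Adj t p → (SN B t p).ncard ≤ k →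
    (B.side t p).Nonempty := by
  haveI := B.fin
  intro k
  induction k with
  | zero =>
    intro t p hp hk
    have : t ∈ SN B t p := SimpleGraph.Reachable.refl _
    have := (Set.ncard_pos (Set.toFinite _)).mpr ⟨t, this⟩
    omega
  | succ k ih =>
    intro t p hp hk
    by_cases hr : t ∈ Set.range B.leaf
    · obtain ⟨w, hw⟩ := hr
      exact ⟨w, show (B.T.deleteEdges {s(t,p)}).Reachable (B.leaf w) t from
        hw ▸ SimpleGraph.Reachable.refl _⟩
    · have hdeg : (B.T.neighborSet t).ncard = 3 := by
        rcases B.deg t with h1 | h3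
        · exact absurd (B.leaf_range ▸ (Set.mem_setOf_eq ▸ h1 : t ∈ {x | (B.T.neighborSet x).ncard = 1})) hr
        · exact h3
      obtain ⟨c₁, c₂, hc₁, hc₂, hne, h1p, h2p, hall⟩ := exists_two_nbrs B hdeg hp
      have hlt := Set.ncard_lt_ncard (SN_ssub B hp hc₁ h1p) (Set.toFinite _)
      obtain ⟨w, hw⟩ := ih hc₁ (by omega)
      exact ⟨w, side_sub B hp hc₁ h1p hw⟩

lemma side_leaf {w : V} {p : B.N} (h : B.T.Adj (B.leaf w) p) :
    B.side (B.leaf w) p = {w} := by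
  have h1 : (B.T.neighborSet (B.leaf w)).ncard = 1 := by
    have : B.leaf w ∈ Set.range B.leaf := Set.mem_range_self w
    rw [B.leaf_range] at this
    exact this
  obtain ⟨a, ha⟩ := Set.ncard_eq_one.mp h1
  have hpa : p = a := by
    have : p ∈ B.T.neighborSet (B.leaf w) := h
    rw [ha] at this
    exact this
  subst hpa
  apply Set.Subset.antisymm
  · intro w' hw'
    have : B.leaf w' = B.leaf w := leaf_side ha hw'
    exact Set.mem_singleton_iff.mpr (B.leaf_inj this)
  · intro w' hw'
    rw [Set.mem_singleton_iff.mp hw']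
    exact SimpleGraph.Reachable.refl _

lemma clsOf_refine {X' X : Set V} (hsub : X' ⊆ X) {C : Set V} (hC : C ∈ clsOf G X') :
    ∃ D ∈ clsOf G X, C ⊆ D := by
  obtain ⟨v, hv, rfl⟩ := hC
  refine ⟨_, ⟨v, hsub hv, rfl⟩, ?_⟩
  rintro u ⟨huX, hu⟩
  exact ⟨hsub huX, fun y hy => hu y (fun hy' => hy (hsub hy'))⟩

lemma not_mem_of_parts {Q R : Set (Set V)} {A B' : Set V} (hQ : PartOf Q A)
    (hR : PartOf R B') (hdis : Disjoint A B') : ∀ Z ∈ Q, Z ∉ R := by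
  intro Z hZ hZR
  obtain ⟨x, hx⟩ := hQ.1 Z hZ
  exact Set.disjoint_left.mp hdis (hQ.subset_of_mem hZ hx) (hR.subset_of_mem hZR hx)

lemma two_pow_succ' (d : ℕ) : 2 ^ (d + 1) = 2 ^ d + 2 ^ d := by
  rw [pow_succ]; ring

lemma main_rec (d : ℕ)
    (hB : ∀ u v : B.N, B.T.Adj u v → boolW G (B.side u v) (B.side u v)ᶜ ≤ (d : ℝ)) :
    ∀ (k : ℕ) {t p : B.N}, B.T.Adj t p → (SN B t p).ncard ≤ k →
    ∃ L : List (Set (Set V)), L ≠ [] ∧ List.Chain' MStep L ∧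
      L.head? = some (clsOf G (B.side t p)) ∧
      L.getLast? = some (singlesOf (B.side t p)) ∧
      ∀ Q ∈ L, PartOf Q (B.side t p) ∧ GoodIn G (2 ^ (d + 1)) Q (B.side t p) := by
  haveI := B.fin
  intro k
  induction k with
  | zero =>
    intro t p hp hk
    have : t ∈ SN B t p := SimpleGraph.Reachable.refl _
    have := (Set.ncard_pos (Set.toFinite _)).mpr ⟨t, this⟩
    omega
  | succ k ih =>
    intro t p hp hk
    by_cases hr : t ∈ Set.range B.leaf
    · -- leaf case
      obtain ⟨w, rfl⟩ := hr
      have hside : B.side (B.leaf w) p = {w} := side_leaf B hp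
      have hcls : clsOf G ({w} : Set V) = {({w} : Set V)} := by
        ext C
        constructor
        · rintro ⟨v, hv, rfl⟩
          rw [Set.mem_singleton_iff.mp hv]
          apply Set.mem_singleton_iff.mpr
          ext u
          simp only [Set.mem_setOf_eq, Set.mem_singleton_iff]
          constructor
          · rintro ⟨h1, -⟩; exact h1
          · rintro rfl; exact ⟨rfl, fun y hy => Iff.rfl⟩
        · rintro rfl
          refine ⟨w, rfl, ?_⟩
          ext u
          simp only [Set.mem_singleton_iff, Set.mem_setOf_eq]
          constructor
          · rintro rfl; exact ⟨rfl, fun y hy => Iff.rfl⟩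
          · rintro ⟨h1, -⟩; exact h1
      have hsing : singlesOf ({w} : Set V) = {({w} : Set V)} := by
        ext C
        constructor
        · rintro ⟨v, hv, rfl⟩
          rw [Set.mem_singleton_iff.mp hv]
          rfl
        · rintro rfl
          exact ⟨w, rfl, rfl⟩
      refine ⟨[{({w} : Set V)}], by simp, List.isChain_singleton _,
        by rw [hside, hcls]; rfl, by rw [hside, hsing]; simp, ?_⟩
      intro Q hQ
      simp only [List.mem_singleton] at hQ
      subst hQ
      rw [hside]
      constructor
      · rw [← hsing]; exact partOf_singlesOf {w}
      · rw [← hsing]; exact goodIn_singlesOf Nat.one_le_two_pow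
    · -- internal case
      have hdeg : (B.T.neighborSet t).ncard = 3 := by
        rcases B.deg t with h1 | h3
        · exact absurd (B.leaf_range ▸ (Set.mem_setOf_eq ▸ h1 :
            t ∈ {x | (B.T.neighborSet x).ncard = 1})) hr
        · exact h3
      obtain ⟨c₁, c₂, hc₁, hc₂, hnecc, h1p, h2p, hall⟩ := exists_two_nbrs B hdeg hp
      obtain ⟨hXeq, hdis⟩ := side_split B hp hdeg hc₁ hc₂ hnecc h1p h2p hall
      set X := B.side t p with hX
      set X₁ := B.side c₁ t with hX₁
      set X₂ := B.side c₂ t with hX₂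
      have hk₁ : (SN B c₁ t).ncard ≤ k := by
        have := Set.ncard_lt_ncard (SN_ssub B hp hc₁ h1p) (Set.toFinite _)
        omega
      have hk₂ : (SN B c₂ t).ncard ≤ k := by
        have := Set.ncard_lt_ncard (SN_ssub B hp hc₂ h2p) (Set.toFinite _)
        omega
      obtain ⟨L₁, hL₁ne, hL₁c, hL₁h, hL₁l, hL₁m⟩ := ih hc₁ hk₁
      obtain ⟨L₂, hL₂ne, hL₂c, hL₂h, hL₂l, hL₂m⟩ := ih hc₂ hk₂
      have n₁ : (clsOf G X₁).ncard ≤ 2 ^ d := clsOf_ncard_le (hB c₁ t hc₁)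
      have n₂ : (clsOf G X₂).ncard ≤ 2 ^ d := clsOf_ncard_le (hB c₂ t hc₂)
      have hpart1 : PartOf (clsOf G X₁) X₁ := partOf_clsOf G X₁
      have hpart2 : PartOf (clsOf G X₂) X₂ := partOf_clsOf G X₂
      have hpartU : PartOf (clsOf G X₁ ∪ clsOf G X₂) X := by
        rw [hXeq]
        exact hpart1.union hpart2 hdis
      have hrefU : ∀ C ∈ clsOf G X₁ ∪ clsOf G X₂, ∃ D ∈ clsOf G X, C ⊆ D := by
        rintro C (hC | hC)
        · exact clsOf_refine (hXeq ▸ Set.subset_union_left) hC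
        · exact clsOf_refine (hXeq ▸ Set.subset_union_right) hC
      have hUcard : (clsOf G X₁ ∪ clsOf G X₂).ncard ≤ 2 ^ (d + 1) := by
        have := Set.ncard_union_le (clsOf G X₁) (clsOf G X₂)
        rw [two_pow_succ' d]
        omega
      obtain ⟨S0, hS0ne, hS0c, hS0h, hS0l, hS0m⟩ :=
        mergeDown ((clsOf G X₁ ∪ clsOf G X₂).ncard) (clsOf G X₁ ∪ clsOf G X₂)
          (clsOf G X) X hpartU (partOf_clsOf G X) hrefU (le_refl _)
      -- mapped lists
      have hmap₂pre : ∀ Q ∈ L₂, ∀ Z ∈ Q, Z ∉ clsOf G X₁ := by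
        intro Q hQ
        exact not_mem_of_parts (hL₂m Q hQ).1 hpart1 hdis.symm
      have hmap₁pre : ∀ Q ∈ L₁, ∀ Z ∈ Q, Z ∉ singlesOf X₂ := by
        intro Q hQ
        exact not_mem_of_parts (hL₁m Q hQ).1 (partOf_singlesOf X₂) hdis
      set M₂ := L₂.map (· ∪ clsOf G X₁) with hM₂
      set M₁ := L₁.map (· ∪ singlesOf X₂) with hM₁
      have hM₂c : List.Chain' MStep M₂ := chain'_map_union L₂ hL₂c hmap₂pre
      have hM₁c : List.Chain' MStep M₁ := chain'_map_union L₁ hL₁c hmap₁pre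
      have hM₂h : M₂.head? = some (clsOf G X₂ ∪ clsOf G X₁) := by
        rw [hM₂, List.head?_map, hL₂h]; rfl
      have hM₂l : M₂.getLast? = some (singlesOf X₂ ∪ clsOf G X₁) := by
        rw [hM₂, List.getLast?_map, hL₂l]; rfl
      have hM₁h : M₁.head? = some (clsOf G X₁ ∪ singlesOf X₂) := by
        rw [hM₁, List.head?_map, hL₁h]; rfl
      have hM₁l : M₁.getLast? = some (singlesOf X₁ ∪ singlesOf X₂) := by
        rw [hM₁, List.getLast?_map, hL₁l]; rfl
      have hM₂ne : M₂ ≠ [] := by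
        rw [hM₂]; simpa using hL₂ne
      have hM₁ne : M₁ ≠ [] := by
        rw [hM₁]; simpa using hL₁ne
      obtain ⟨g1c, g1h, g1l, g1m⟩ := glue hS0c hM₂c hS0ne hM₂ne
        (by rw [hS0l, hM₂h, Set.union_comm])
      have g1ne : S0 ++ M₂.tail ≠ [] := by
        intro hcon
        exact hS0ne (List.append_eq_nil_iff.mp hcon).1
      obtain ⟨g2c, g2h, g2l, g2m⟩ := glue g1c hM₁c g1ne hM₁ne
        (by rw [g1l, hM₂l, hM₁h, Set.union_comm])
      refine ⟨(S0 ++ M₂.tail) ++ M₁.tail, ?_, g2c, ?_, ?_, ?_⟩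
      · intro hcon
        exact g1ne (List.append_eq_nil_iff.mp hcon).1
      · rw [g2h, g1h, hS0h]
      · rw [g2l, hM₁l, ← singlesOf_union, ← hXeq]
      · intro Q hQ
        rcases g2m Q hQ with hQ' | hQ'
        · rcases g1m Q hQ' with hQ'' | hQ''
          · -- seg part
            obtain ⟨hpo, href, hnc⟩ := hS0m Q hQ''
            refine ⟨hpo, goodIn_refine hpo href ?_⟩
            omega
          · -- mapped₂ part
            obtain ⟨Q₀, hQ₀, rfl⟩ := List.mem_map.mp hQ''
            obtain ⟨hpo, hgo⟩ := hL₂m Q₀ hQ₀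
            constructor
            · rw [hXeq, Set.union_comm X₁ X₂]
              exact hpo.union hpart1 hdis.symm
            · rw [hXeq]
              exact goodIn_union hdis hgo hpo.1
                (goodIn_clsOf (le_trans n₁ (by rw [two_pow_succ' d]; omega)))
                hpart1.1
        · -- mapped₁ part
          obtain ⟨Q₀, hQ₀, rfl⟩ := List.mem_map.mp hQ'
          obtain ⟨hpo, hgo⟩ := hL₁m Q₀ hQ₀
          constructor
          · rw [hXeq]
            exact hpo.union (partOf_singlesOf X₂) hdis
          · rw [hXeq, Set.union_comm X₁ X₂]
            exact goodIn_union hdis.symm hgo hpo.1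
              (goodIn_singlesOf Nat.one_le_two_pow) (partOf_singlesOf X₂).1

lemma singlesOf_single (v : V) : singlesOf ({v} : Set V) = {({v} : Set V)} := by
  ext C
  constructor
  · rintro ⟨u, hu, rfl⟩
    rw [Set.mem_singleton_iff.mp hu]
    rfl
  · rintro rfl
    exact ⟨v, rfl, rfl⟩

lemma singlesOf_ncard_univ : (singlesOf (Set.univ : Set V)).ncard = Fintype.card V := by
  have : singlesOf (Set.univ : Set V) = (fun v => ({v} : Set V)) '' Set.univ := by
    ext C
    constructor
    · rintro ⟨v, -, rfl⟩
      exact ⟨v, trivial, rfl⟩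
    · rintro ⟨v, -, rfl⟩
      exact ⟨v, trivial, rfl⟩
  rw [this, Set.ncard_image_of_injective _ Set.singleton_injective, Set.ncard_univ,
    Nat.card_eq_fintype_card]

lemma getD_head {α : Type*} {l : List α} {h : α} (hh : l.head? = some h) (d : α) :
    l.getD 0 d = h := by
  cases l with
  | nil => simp at hh
  | cons a t => simpa using hh

lemma getD_last {α : Type*} {l : List α} {z : α} (hz : l.getLast? = some z) (d : α) :
    l.getD (l.length - 1) d = z := by
  have hne : l ≠ [] := by
    intro hcon; subst hcon; simp at hz
  rw [List.getLast?_eq_getLast hne] at hz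
  have hlt : l.length - 1 < l.length := by
    have := List.length_pos_iff.mpr hne
    omega
  rw [List.getD_eq_getElem l d hlt]
  have := List.getLast_eq_getElem hne
  rw [Option.some_inj] at hz
  rw [← hz, this]

lemma partOf_isPartition {Q : Set (Set V)} (h : PartOf Q Set.univ) :
    Setoid.IsPartition Q := by
  constructor
  · intro hcon
    obtain ⟨x, hx⟩ := h.1 ∅ hcon
    exact hx
  · intro a
    have : a ∈ ⋃₀ Q := h.2.2.symm ▸ Set.mem_univ a
    obtain ⟨C, hC, haC⟩ := this
    refine ⟨C, ⟨hC, haC⟩, ?_⟩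
    rintro C' ⟨hC', haC'⟩
    rcases h.2.1 C' hC' C hC with rfl | hd
    · rfl
    · exact absurd haC (fun hx => Set.disjoint_left.mp hd haC' hx)

end BD


/-- If `G` has a branch decomposition of boolean-width at most `d`, then `G` has
component twin-width at most `2 ^ (d + 1)`: there is a partition sequence in which
every red component of every quotient trigraph has at most `2 ^ (d + 1)` parts. -/
theorem stmt9 {V : Type*} [Fintype V] (G : SimpleGraph V) (d : ℕ)
    (B : BranchDecomp V)
    (h : ∀ u v : B.N, B.T.Adj u v →
      boolW G (B.side u v) (B.side u v)ᶜ ≤ (d : ℝ)) :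
    ∃ S : PartitionSeq V, ∀ i, 1 ≤ i → i ≤ S.n →
      wc G (S.P i) ≤ 2 ^ (d + 1) := by
  classical
  haveI := B.fin
  rcases isEmpty_or_nonempty V with hV | hV
  · -- empty vertex set
    refine ⟨⟨0, (Fintype.card_eq_zero).symm, fun i => if i = 0 then ∅ else {Set.univ},
      ?_, ?_, ?_, ?_⟩, ?_⟩
    · intro i h1 h2; omega
    · simp only [if_pos rfl]
      ext S
      simp
    · simp
    · intro i h1 h2; omega
    · intro i h1 h2
      simp only at h2
      omega
  · -- nonempty
    set v₀ : V := Classical.arbitrary V with hv₀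
    set ρ : B.N := B.leaf v₀ with hρ
    have hdegρ : (B.T.neighborSet ρ).ncard = 1 := by
      have : ρ ∈ Set.range B.leaf := Set.mem_range_self v₀
      rw [B.leaf_range] at this
      exact this
    obtain ⟨c, hcset⟩ := Set.ncard_eq_one.mp hdegρ
    have hadjρc : B.T.Adj ρ c := by
      have : c ∈ B.T.neighborSet ρ := by rw [hcset]; rfl
      exact this
    have hadjcρ : B.T.Adj c ρ := hadjρc.symm
    have hXc : B.side c ρ = ({v₀} : Set V)ᶜ := by
      apply Set.Subset.antisymm
      · intro w hw
        simp only [Set.mem_compl_iff, Set.mem_singleton_iff]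
        rintro rfl
        exact notReach_bridge B.tree hadjcρ (SimpleGraph.Reachable.symm hw)
      · intro w hw
        simp only [Set.mem_compl_iff, Set.mem_singleton_iff] at hw
        rcases side_dichot (u := c) (v := ρ) B.tree (B.leaf w) with hr | hr
        · exact hr
        · exfalso
          have hr' : (B.T.deleteEdges {s(ρ,c)}).Reachable (B.leaf w) ρ := by
            rwa [swap_single c ρ] at hr
          exact hw (B.leaf_inj (leaf_side hcset hr'))
    obtain ⟨Lc, hLcne, hLcc, hLch, hLcl, hLcm⟩ :=
      main_rec B d h ((SN B c ρ).ncard) hadjcρ (le_refl _)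
    set Qj : Set (Set V) := clsOf G (B.side c ρ) ∪ singlesOf ({v₀} : Set V) with hQj
    have hdisj : Disjoint ({v₀} : Set V) (B.side c ρ) := by
      rw [hXc]
      exact disjoint_compl_right
    have hclsc : (clsOf G (B.side c ρ)).ncard ≤ 2 ^ d := clsOf_ncard_le (h c ρ hadjcρ)
    have hQjcard : Qj.ncard ≤ 2 ^ (d + 1) := by
      have h1 : Qj.ncard ≤ (clsOf G (B.side c ρ)).ncard + (singlesOf ({v₀} : Set V)).ncard := by
        rw [hQj]; exact Set.ncard_union_le _ _
      have h2 : (singlesOf ({v₀} : Set V)).ncard = 1 := by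
        rw [singlesOf_single]; exact Set.ncard_singleton _
      have h3 := two_pow_succ' d
      have h4 : 1 ≤ 2 ^ d := Nat.one_le_two_pow
      omega
    have hUeq : B.side c ρ ∪ ({v₀} : Set V) = Set.univ := by
      rw [hXc, Set.compl_union_self]
    have hUeq2 : ({v₀} : Set V) ∪ B.side c ρ = Set.univ := by
      rw [hXc, Set.union_compl_self]
    have hQjpart : PartOf Qj Set.univ := by
      have hp := (partOf_clsOf G (B.side c ρ)).union (partOf_singlesOf ({v₀} : Set V))
        hdisj.symm
      rw [hUeq] at hp
      rw [hQj]
      exact hp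
    have hwhole : PartOf ({Set.univ} : Set (Set V)) (Set.univ : Set V) := by
      refine ⟨?_, ?_, ?_⟩
      · intro C hC
        rw [Set.mem_singleton_iff.mp hC]
        exact Set.univ_nonempty
      · intro C hC C' hC'
        rw [Set.mem_singleton_iff.mp hC, Set.mem_singleton_iff.mp hC']
        exact Or.inl rfl
      · exact Set.sUnion_singleton _
    obtain ⟨L0, hL0ne, hL0c, hL0h, hL0l, hL0m⟩ := mergeDown (Qj.ncard) Qj {Set.univ}
      Set.univ hQjpart hwhole (fun C hC => ⟨Set.univ, rfl, Set.subset_univ C⟩) (le_refl _)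
    have hmappre : ∀ Q ∈ Lc, ∀ Z ∈ Q, Z ∉ singlesOf ({v₀} : Set V) := by
      intro Q hQ
      exact not_mem_of_parts (hLcm Q hQ).1 (partOf_singlesOf _) hdisj.symm
    set Mp := Lc.map (· ∪ singlesOf ({v₀} : Set V)) with hMp
    have hMpc : List.Chain' MStep Mp := chain'_map_union Lc hLcc hmappre
    have hMph : Mp.head? = some Qj := by rw [hMp, List.head?_map, hLch]; rfl
    have hsu : singlesOf (B.side c ρ) ∪ singlesOf ({v₀} : Set V)
        = singlesOf (Set.univ : Set V) := by
      rw [← singlesOf_union, hXc, Set.compl_union_self]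
    have hMpl : Mp.getLast? = some (singlesOf (Set.univ : Set V)) := by
      have : Mp.getLast? = some (singlesOf (B.side c ρ) ∪ singlesOf ({v₀} : Set V)) := by
        rw [hMp, List.getLast?_map, hLcl]; rfl
      rw [this, hsu]
    have hMpne : Mp ≠ [] := by rw [hMp]; simpa using hLcne
    obtain ⟨gc, gh, gl, gm⟩ := glue hL0c hMpc hL0ne hMpne (by rw [hL0l, hMph])
    set L := L0 ++ Mp.tail with hLdef
    have hLne : L ≠ [] := fun hcon => hL0ne (List.append_eq_nil_iff.mp hcon).1
    have hLh : L.head? = some {Set.univ} := by rw [hLdef, gh, hL0h]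
    have hLl : L.getLast? = some (singlesOf (Set.univ : Set V)) := by rw [hLdef, gl, hMpl]
    have hmem : ∀ Q ∈ L, PartOf Q Set.univ ∧ GoodIn G (2 ^ (d + 1)) Q Set.univ := by
      intro Q hQ
      rcases gm Q hQ with hQ' | hQ'
      · obtain ⟨hpo, href, hnc⟩ := hL0m Q hQ'
        exact ⟨hpo, goodIn_univ (le_trans hnc hQjcard)⟩
      · obtain ⟨Q₀, hQ₀, rfl⟩ := List.mem_map.mp hQ'
        obtain ⟨hpo, hgo⟩ := hLcm Q₀ hQ₀
        constructor
        · have hp := hpo.union (partOf_singlesOf ({v₀} : Set V)) hdisj.symm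
          rwa [hUeq] at hp
        · have hg := goodIn_union hdisj hgo hpo.1
            (goodIn_singlesOf Nat.one_le_two_pow) (partOf_singlesOf _).1
          rwa [hUeq2] at hg
    have hlen : L.length = Fintype.card V := by
      have hcc := chain_card L {Set.univ} (singlesOf Set.univ) gc
        (fun Q hQ => (hmem Q hQ).1) hLh hLl
      have h1 : ({Set.univ} : Set (Set V)).ncard = 1 := Set.ncard_singleton _
      have h2 := singlesOf_ncard_univ (V := V)
      omega
    have hn1 : 1 ≤ Fintype.card V := Fintype.card_pos
    refine ⟨⟨Fintype.card V, rfl, fun i => L.getD (i - 1) ∅, ?_, ?_, ?_, ?_⟩, ?_⟩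
    · intro i h1 h2
      have hidx : i - 1 < L.length := by omega
      show Setoid.IsPartition (L.getD (i - 1) ∅)
      rw [List.getD_eq_getElem L ∅ hidx]
      exact partOf_isPartition (hmem _ (List.getElem_mem hidx)).1
    · have hgl : L.getD (Fintype.card V - 1) ∅ = singlesOf Set.univ := by
        rw [← hlen]; exact getD_last hLl ∅
      show L.getD (Fintype.card V - 1) ∅ = _
      rw [hgl]
      ext S
      simp [singlesOf]
    · exact getD_head hLh ∅
    · intro i h1 h2
      have hidx1 : i - 1 < L.length := by omega
      have hidx2 : i < L.length := by omega
      have hstep := List.isChain_iff_getElem.mp gc (i - 1) (by omega)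
      have e1 : i - 1 + 1 = i := by omega
      simp only [e1] at hstep
      show MStep (L.getD (i - 1) ∅) (L.getD (i + 1 - 1) ∅)
      have e2 : i + 1 - 1 = i := by omega
      rw [List.getD_eq_getElem L ∅ hidx1, e2, List.getD_eq_getElem L ∅ hidx2]
      exact hstep
    · intro i h1 h2
      have h2' : i ≤ Fintype.card V := h2
      have hidx : i - 1 < L.length := by omega
      show wc G (L.getD (i - 1) ∅) ≤ 2 ^ (d + 1)
      rw [List.getD_eq_getElem L ∅ hidx]
      exact wc_le_of_good (hmem _ (List.getElem_mem hidx)).2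
end

section
/- At most one part of a mixed minor's row division can be contained in a single part of an earlier partition: if a symmetric division sequence on an ordered adjacency matrix is stopped the first time any part of a fixed (2d+2)-mixed minor is contained in a part of the division, and that part is a column part C_j, then among any d+1 rows r_1, r_3, ..., r_{2d+1} chosen from distinct row-parts R_1, R_3, ..., R_{2d+1} of the mixed minor, at most one pair of these rows lies in the same part of the current row-division. -/
open Set

/-- The `t`-th part of the division of `Fin n` with boundary function `b`. -/
def rowPart {n k : ℕ} (b : Fin (k + 1) → ℕ) (t : Fin k) : Set (Fin n) :=
  {i : Fin n | b t.castSucc ≤ (i : ℕ) ∧ (i : ℕ) < b t.succ}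

/-- A zone is vertical: constant along each column. -/
def Vertical {n : ℕ} (M : Fin n → Fin n → Bool) (R C : Set (Fin n)) : Prop :=
  ∀ i ∈ R, ∀ i' ∈ R, ∀ j ∈ C, M i j = M i' j

/-- A zone is horizontal: constant along each row. -/
def Horizontal {n : ℕ} (M : Fin n → Fin n → Bool) (R C : Set (Fin n)) : Prop :=
  ∀ i ∈ R, ∀ j ∈ C, ∀ j' ∈ C, M i j = M i j'

/-- A zone is mixed: neither vertical nor horizontal. -/
def Mixed {n : ℕ} (M : Fin n → Fin n → Bool) (R C : Set (Fin n)) : Prop :=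
  ¬ Vertical M R C ∧ ¬ Horizontal M R C

/-- An interval of `Fin n`. -/
def IsIntervalSet {n : ℕ} (Q : Set (Fin n)) : Prop :=
  ∀ ⦃a⦄, a ∈ Q → ∀ ⦃b⦄, b ∈ Q → ∀ ⦃c⦄, a ≤ c → c ≤ b → c ∈ Q

/-- Two disjoint intervals are totally ordered one way or the other. -/
lemma interval_orient {n : ℕ} {A B : Set (Fin n)}
    (hA : IsIntervalSet A) (hB : IsIntervalSet B) (hAB : ∀ x, x ∈ A → x ∉ B) :
    (∀ a ∈ A, ∀ b ∈ B, a < b) ∨ (∀ a ∈ A, ∀ b ∈ B, b < a) := by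
  by_contra h
  push_neg at h
  obtain ⟨⟨a, ha, b, hb, hba⟩, ⟨a', ha', b', hb', hab⟩⟩ := h
  rcases le_total a b' with h1 | h1
  · exact hAB a ha (hB hb hb' hba h1)
  · exact hAB b' (hA ha' ha hab h1) hb'

/-- Two disjoint intervals cannot both cross between two disjoint intervals. -/
lemma cross_unique {n : ℕ} {A B s s' : Set (Fin n)}
    (hA : IsIntervalSet A) (hB : IsIntervalSet B) (hAB : ∀ x, x ∈ A → x ∉ B)
    (hs : IsIntervalSet s) (hs' : IsIntervalSet s')
    (hss' : ∀ x, x ∈ s → x ∉ s')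
    {p q p' q' : Fin n} (hpA : p ∈ A) (hps : p ∈ s) (hqB : q ∈ B) (hqs : q ∈ s)
    (hp'A : p' ∈ A) (hp's : p' ∈ s') (hq'B : q' ∈ B) (hq's : q' ∈ s') : False := by
  rcases interval_orient hA hB hAB with ho | ho
  · rcases le_total p p' with h | h
    · exact hss' p' (hs hps hqs h (ho p' hp'A q hqB).le) hp's
    · exact hss' p hps (hs' hp's hq's h (ho p hpA q' hq'B).le)
  · rcases le_total q q' with h | h
    · exact hss' q' (hs hqs hps h (ho p hpA q' hq'B).le) hq's
    · exact hss' q hqs (hs' hq's hp's h (ho p' hp'A q hqB).le)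

/-- Key lemma for bounded oriented twin-width implying bounded mixed value.
Suppose the square matrix `M` has a `(2d+2)`-mixed minor with row boundaries
`rb` and column boundaries `cb`. Suppose the interval division `D'` of `Fin n`
contains no part of the mixed minor inside any of its parts (the symmetric
division sequence has not yet engulfed a minor part), and `D` is obtained from
`D'` by merging two parts (and is still an interval division), such that some
column part `C j` of the minor is contained in a part of `D` (the stopping
condition). Then, among `d+1` rows `r 0, …, r d` chosen in pairwise distinct,
pairwise non-adjacent row-parts of the minor (such as `R 1, R 3, …, R (2d+1)`),
at most one pair of these rows lies in a common part of `D`. -/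
theorem stmt13 {n d : ℕ} (M : Fin n → Fin n → Bool)
    (rb cb : Fin (2 * d + 2 + 1) → ℕ)
    (hrb : StrictMono rb) (hcb : StrictMono cb)
    (hrb0 : rb 0 = 0) (hrbn : rb (Fin.last (2 * d + 2)) = n)
    (hcb0 : cb 0 = 0) (hcbn : cb (Fin.last (2 * d + 2)) = n)
    (hmixed : ∀ s t : Fin (2 * d + 2),
      Mixed M (rowPart rb s) (rowPart cb t))
    (D D' : Set (Set (Fin n)))
    (hD'part : Setoid.IsPartition D') (hD'int : ∀ Q ∈ D', IsIntervalSet Q)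
    (hD'none : ∀ Q ∈ D', (∀ s : Fin (2 * d + 2), ¬ rowPart rb s ⊆ Q) ∧
      (∀ t : Fin (2 * d + 2), ¬ rowPart cb t ⊆ Q))
    (hmerge : ∃ A B, A ∈ D' ∧ B ∈ D' ∧ A ≠ B ∧ D = (D' \ {A, B}) ∪ {A ∪ B})
    (hDint : ∀ Q ∈ D, IsIntervalSet Q)
    (j : Fin (2 * d + 2)) (hj : ∃ Q ∈ D, rowPart cb j ⊆ Q)
    (r : Fin (d + 1) → Fin n) (f : Fin (d + 1) → Fin (2 * d + 2))
    (hfmono : StrictMono f)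
    (hfgap : ∀ k k' : Fin (d + 1), k < k' → (f k : ℕ) + 2 ≤ (f k' : ℕ))
    (hr : ∀ k, r k ∈ rowPart rb (f k)) :
    ∀ k1 k2 k3 k4 : Fin (d + 1), k1 ≠ k2 → k3 ≠ k4 →
      (∃ Q ∈ D, r k1 ∈ Q ∧ r k2 ∈ Q) → (∃ Q ∈ D, r k3 ∈ Q ∧ r k4 ∈ Q) →
      ({k1, k2} : Set (Fin (d + 1))) = {k3, k4} := by
  obtain ⟨A, B, hAmem, hBmem, hABne, hDdef⟩ := hmerge
  -- distinct parts of the partition are disjoint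
  have hdisj : ∀ P P', P ∈ D' → P' ∈ D' → P ≠ P' → ∀ x, x ∈ P → x ∉ P' := by
    intro P P' hP hP' hne x hxP hxP'
    obtain ⟨Q, -, hQu⟩ := hD'part.2 x
    exact hne ((hQu P ⟨hP, hxP⟩) ▸ (hQu P' ⟨hP', hxP'⟩).symm ▸ rfl)
  have hABdisj : ∀ x, x ∈ A → x ∉ B := hdisj A B hAmem hBmem hABne
  -- rowParts are intervals
  have hrpint : ∀ s : Fin (2 * d + 2), IsIntervalSet (rowPart (n := n) rb s) := by
    intro s a ha b hb c hac hcb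
    have h1 := Fin.le_def.1 hac
    have h2 := Fin.le_def.1 hcb
    simp only [rowPart, Set.mem_setOf_eq] at ha hb ⊢
    omega
  -- distinct rowParts are disjoint
  have hrpdisj : ∀ s s' : Fin (2 * d + 2), s ≠ s' →
      ∀ x, x ∈ rowPart (n := n) rb s → x ∉ rowPart rb s' := by
    have aux : ∀ s s' : Fin (2 * d + 2), s < s' →
        ∀ x, x ∈ rowPart (n := n) rb s → x ∉ rowPart rb s' := by
      intro s s' hlt x hx hx'
      have hlt' : (s : ℕ) < (s' : ℕ) := hlt
      have h1 : rb s.succ ≤ rb s'.castSucc := hrb.monotone (by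
        simp only [Fin.le_def, Fin.val_succ, Fin.coe_castSucc]; omega)
      simp only [rowPart, Set.mem_setOf_eq] at hx hx'
      omega
    intro s s' hne x hx hx'
    rcases hne.lt_or_gt with h | h
    · exact aux s s' h x hx hx'
    · exact aux s' s h x hx' hx
  -- the key claim for an ordered pair
  have key : ∀ k k' : Fin (d + 1), k < k' → ∀ Q, Q ∈ D → r k ∈ Q → r k' ∈ Q →
      (k' : ℕ) = (k : ℕ) + 1 ∧
      ∃ s : Fin (2 * d + 2), (s : ℕ) = (f k : ℕ) + 1 ∧
        (∃ p, p ∈ rowPart (n := n) rb s ∧ p ∈ A) ∧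
        (∃ q, q ∈ rowPart rb s ∧ q ∈ B) := by
    intro k k' hkk' Q hQ hrk hrk'
    have hgap := hfgap k k' hkk'
    have hfk' : (f k' : ℕ) < 2 * d + 2 := (f k').isLt
    -- every rowPart strictly between f k and f k' is a subset of Q
    have hsub : ∀ s : Fin (2 * d + 2), (f k : ℕ) < (s : ℕ) → (s : ℕ) < (f k' : ℕ) →
        rowPart rb s ⊆ Q := by
      intro s hs1 hs2 i hi
      have h1 : rb (f k).succ ≤ rb s.castSucc := hrb.monotone (by
        simp [Fin.le_def]; omega)
      have h2 : rb s.succ ≤ rb (f k').castSucc := hrb.monotone (by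
        simp [Fin.le_def]; omega)
      have hk1 := hr k
      have hk2 := hr k'
      simp only [rowPart, Set.mem_setOf_eq] at hi hk1 hk2
      exact hDint Q hQ hrk hrk' (by simp only [Fin.le_def]; omega)
        (by simp only [Fin.le_def]; omega)
    -- Q must be the merged part A ∪ B
    have hQAB : Q = A ∪ B := by
      rw [hDdef] at hQ
      rcases hQ with ⟨hQ', -⟩ | hQ
      · exact absurd (hsub ⟨(f k : ℕ) + 1, by omega⟩ (by simp) (by simp; omega))
          ((hD'none Q hQ').1 _)
      · simpa using hQ
    -- each rowPart strictly between crosses from A to B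
    have hcross : ∀ s : Fin (2 * d + 2), (f k : ℕ) < (s : ℕ) → (s : ℕ) < (f k' : ℕ) →
        (∃ p, p ∈ rowPart (n := n) rb s ∧ p ∈ A) ∧
        (∃ q, q ∈ rowPart rb s ∧ q ∈ B) := by
      intro s hs1 hs2
      have hsubAB : rowPart rb s ⊆ A ∪ B := hQAB ▸ hsub s hs1 hs2
      have hnA : ¬ rowPart (n := n) rb s ⊆ A := (hD'none A hAmem).1 s
      have hnB : ¬ rowPart (n := n) rb s ⊆ B := (hD'none B hBmem).1 s
      constructor
      · obtain ⟨p, hps, hpB⟩ := not_subset.1 hnB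
        rcases hsubAB hps with h | h
        · exact ⟨p, hps, h⟩
        · exact absurd h hpB
      · obtain ⟨q, hqs, hqA⟩ := not_subset.1 hnA
        rcases hsubAB hqs with h | h
        · exact absurd h hqA
        · exact ⟨q, hqs, h⟩
    -- f k' = f k + 2
    have hfeq : (f k' : ℕ) = (f k : ℕ) + 2 := by
      by_contra hne
      have h3 : (f k : ℕ) + 3 ≤ (f k') := by omega
      set s1 : Fin (2 * d + 2) := ⟨(f k : ℕ) + 1, by omega⟩
      set s2 : Fin (2 * d + 2) := ⟨(f k : ℕ) + 2, by omega⟩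
      obtain ⟨⟨p, hps, hpA⟩, ⟨q, hqs, hqB⟩⟩ := hcross s1 (by simp [s1]) (by simp [s1]; omega)
      obtain ⟨⟨p', hp's, hp'A⟩, ⟨q', hq's, hq'B⟩⟩ := hcross s2 (by simp [s2]) (by simp [s2]; omega)
      exact cross_unique (hD'int A hAmem) (hD'int B hBmem) hABdisj (hrpint s1) (hrpint s2)
        (hrpdisj s1 s2 (by simp [s1, s2, Fin.ext_iff])) hpA hps hqB hqs hp'A hp's hq'B hq's
    -- k' = k + 1
    have hkeq : (k' : ℕ) = (k : ℕ) + 1 := by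
      by_contra hne
      have hmid : (k : ℕ) + 1 < (k' : ℕ) := by
        have h := Fin.lt_def.1 hkk'
        omega
      have h1 := hfgap k ⟨(k : ℕ) + 1, by omega⟩ (by rw [Fin.lt_def]; simp)
      have h2 := hfgap ⟨(k : ℕ) + 1, by omega⟩ k' (by rw [Fin.lt_def]; simpa)
      omega
    refine ⟨hkeq, ⟨(f k : ℕ) + 1, by omega⟩, by simp, hcross _ (by simp) (by simp; omega)⟩
  -- from the key claim, ordered pairs with a common part must be equal
  have main : ∀ a b c e : Fin (d + 1), a < b → c < e →
      (∃ Q ∈ D, r a ∈ Q ∧ r b ∈ Q) → (∃ Q ∈ D, r c ∈ Q ∧ r e ∈ Q) → a = c ∧ b = e := by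
    intro a b c e hab hce ⟨Q, hQ, h1, h2⟩ ⟨Q', hQ', h3, h4⟩
    obtain ⟨hb1, s, hs, ⟨p, hps, hpA⟩, ⟨q, hqs, hqB⟩⟩ := key a b hab Q hQ h1 h2
    obtain ⟨he1, s', hs', ⟨p', hp's, hp'A⟩, ⟨q', hq's, hq'B⟩⟩ := key c e hce Q' hQ' h3 h4
    have hac : a = c := by
      by_contra hne
      have hfne : f a ≠ f c := fun h => hne (hfmono.injective h)
      have hsne : s ≠ s' := by
        intro h
        have := congrArg Fin.val h
        exact hfne (Fin.ext (by omega))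
      exact cross_unique (hD'int A hAmem) (hD'int B hBmem) hABdisj (hrpint s) (hrpint s')
        (hrpdisj s s' hsne) hpA hps hqB hqs hp'A hp's hq'B hq's
    refine ⟨hac, Fin.ext (by rw [hb1, he1, hac])⟩
  intro k1 k2 k3 k4 h12 h34 hP hP'
  rcases h12.lt_or_gt with h12' | h12' <;> rcases h34.lt_or_gt with h34' | h34'
  · obtain ⟨hac, hbe⟩ := main k1 k2 k3 k4 h12' h34' hP hP'
    rw [hac, hbe]
  · obtain ⟨hac, hbe⟩ := main k1 k2 k4 k3 h12' h34'
      hP (by obtain ⟨Q, hQ, hx, hy⟩ := hP'; exact ⟨Q, hQ, hy, hx⟩)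
    rw [hac, hbe, Set.pair_comm]
  · obtain ⟨hac, hbe⟩ := main k2 k1 k3 k4 h12' h34'
      (by obtain ⟨Q, hQ, hx, hy⟩ := hP; exact ⟨Q, hQ, hy, hx⟩) hP'
    rw [← hac, ← hbe, Set.pair_comm]
  · obtain ⟨hac, hbe⟩ := main k2 k1 k4 k3 h12' h34'
      (by obtain ⟨Q, hQ, hx, hy⟩ := hP; exact ⟨Q, hQ, hy, hx⟩)
      (by obtain ⟨Q, hQ, hx, hy⟩ := hP'; exact ⟨Q, hQ, hy, hx⟩)
    rw [← hac, ← hbe]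
end
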